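/- Let U, V ⊆ ℝ² be transverse sets with U a simple set and V a good set, and let {V_ℓ} be the connected components of V. Then U and V_ℓ are transverse for every ℓ. Moreover, if ∂U is bounded then trivially X_{U,V} = 0 = X_{U,V_ℓ} for all ℓ; and if ∂U is unbounded then, for any simple path γ with range ∂U: the limits χ_±(γ,W) := lim_{t→±∞} 1_W(γ(t)) exist for W = V and for W = V_ℓ (every ℓ); setting χ(γ,W) = χ₊(γ,W) − χ₋(γ,W), one has χ(γ,V_ℓ) ≠ 0 for at most two values of ℓ; and χ(γ,V) = Σ_ℓ χ(γ,V_ℓ). -/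

import Mathlib

noncomputable section

/-- The lattice ℤ². -/
abbrev Z2 := ℤ × ℤ
/-- The plane ℝ². -/
abbrev R2 := ℝ × ℝ

/-- The ℓ¹ distance on the plane. -/
def d1 (x y : R2) : ℝ := |x.1 - y.1| + |x.2 - y.2|

/-- The ℓ¹ distance from a point to a set. -/
def d1S (x : R2) (S : Set R2) : ℝ := sInf (d1 x '' S)

/-- The logarithmic distance on the plane: d_l(x,y) = ln(1 + d₁(x,y)). -/
def dl (x y : R2) : ℝ := Real.log (1 + d1 x y)

/-- The logarithmic distance from a point to a set. -/
def dlS (x : R2) (S : Set R2) : ℝ := Real.log (1 + d1S x S)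

/-- The Euclidean norm on the plane. -/
def eunorm (x : R2) : ℝ := Real.sqrt (x.1 ^ 2 + x.2 ^ 2)

/-- The Euclidean distance on the plane. -/
def eudist (x y : R2) : ℝ := eunorm (x - y)

/-- The embedding of ℤ² into ℝ². -/
def emb (x : Z2) : R2 := ((x.1 : ℝ), (x.2 : ℝ))

/-- Ψ_{U,V}(x) = 1 + d₁(x,∂U) + d₁(x,∂V). -/
def Psi (U V : Set R2) (x : R2) : ℝ := 1 + d1S x (frontier U) + d1S x (frontier V)

/-- U and V are transverse: for some c ∈ (0,1), Ψ_{U,V}(x) ≥ |x|ᶜ whenever |x| ≥ 1/c. -/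
def Transverse (U V : Set R2) : Prop :=
  ∃ c : ℝ, 0 < c ∧ c < 1 ∧ ∀ x : R2, 1 / c ≤ eunorm x → eunorm x ^ c ≤ Psi U V x

/-- The operator norm of an m×m complex matrix. -/
def matNorm {m : ℕ} (M : Matrix (Fin m) (Fin m) ℂ) : ℝ :=
  ‖Matrix.toEuclideanCLM (𝕜 := ℂ) M‖

/-- The real-valued indicator function of a subset of the plane. -/
def indR (W : Set R2) (z : R2) : ℝ := Set.indicator W (fun _ => (1:ℝ)) z

/-- A simple path: continuous, injective, proper, smooth outside a closed discrete set,
with unit left and right derivatives everywhere. -/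
structure IsSimplePath (γ : ℝ → R2) : Prop where
  continuous : Continuous γ
  injective : Function.Injective γ
  proper : ∀ K : Set R2, IsCompact K → IsCompact (γ ⁻¹' K)
  smooth : ∃ S : Set ℝ, IsClosed S ∧ DiscreteTopology ↥S ∧ ContDiffOn ℝ (⊤ : ℕ∞) γ Sᶜ
  deriv_right : ∀ t : ℝ, ∃ v : R2, HasDerivWithinAt γ v (Set.Ici t) t ∧ eunorm v = 1
  deriv_left : ∀ t : ℝ, ∃ v : R2, HasDerivWithinAt γ v (Set.Iic t) t ∧ eunorm v = 1

/-- A simple loop: periodic, injective over a period, smooth outside a closed discrete set,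
with unit left and right derivatives everywhere. -/
structure IsSimpleLoop (γ : ℝ → R2) : Prop where
  continuous : Continuous γ
  periodic : ∃ T : ℝ, 0 < T ∧ Function.Periodic γ T ∧ Set.InjOn γ (Set.Ico 0 T)
  smooth : ∃ S : Set ℝ, IsClosed S ∧ DiscreteTopology ↥S ∧ ContDiffOn ℝ (⊤ : ℕ∞) γ Sᶜ
  deriv_right : ∀ t : ℝ, ∃ v : R2, HasDerivWithinAt γ v (Set.Ici t) t ∧ eunorm v = 1
  deriv_left : ∀ t : ℝ, ∃ v : R2, HasDerivWithinAt γ v (Set.Iic t) t ∧ eunorm v = 1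

/-- A simple set: open, connected, boundary the range of a simple path or loop. -/
def IsSimpleSet (A : Set R2) : Prop :=
  IsOpen A ∧ IsConnected A ∧
    ∃ γ : ℝ → R2, (IsSimplePath γ ∨ IsSimpleLoop γ) ∧ frontier A = Set.range γ

/-- The set of connected components of a subset of the plane. -/
def components (S : Set R2) : Set (Set R2) :=
  {C | ∃ x ∈ S, C = connectedComponentIn S x}

/-- A good set: open, int(A^c) has boundary ∂A, the connected components of ∂A are
well-separated ranges of simple paths or loops, and ∂A avoids ℤ². -/
def IsGoodSet (A : Set R2) : Prop :=
  IsOpen A ∧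
  frontier (interior Aᶜ) = frontier A ∧
  (∀ Γ ∈ components (frontier A),
    ∃ γ : ℝ → R2, (IsSimplePath γ ∨ IsSimpleLoop γ) ∧ Γ = Set.range γ) ∧
  (∃ ρ : ℝ, 0 < ρ ∧ ∀ Γ ∈ components (frontier A), ∀ Γ' ∈ components (frontier A),
    Γ ≠ Γ' → ∀ x ∈ Γ, ∀ y ∈ Γ', ρ ≤ eudist x y) ∧
  (∀ x : Z2, emb x ∉ frontier A)

/-- The open Euclidean disk. -/
def eball (z : R2) (r : ℝ) : Set R2 := {x | eudist x z < r}

/-- The closed curve obtained by following γ from γ(a) to γ(b) and then the circular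
arc of the circle centered at z of radius r from angle β to angle α. -/
def ellCurve (γ : ℝ → R2) (a b : ℝ) (z : R2) (r α β : ℝ) : ℝ → R2 := fun t =>
  if t ≤ 0 then γ (b * (1 + t) - a * t)
  else (z.1 + r * Real.cos ((1 - t) * β + t * α), z.2 + r * Real.sin ((1 - t) * β + t * α))

/-- L is the left of γ in the disk of center z and radius r: the disk is simply split
by γ, and L is the bounded connected component of the complement of the closed curve ℓ. -/
def LeftInDisk (γ : ℝ → R2) (z : R2) (r : ℝ) (L : Set R2) : Prop :=
  ∃ a b α β : ℝ, a < b ∧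
    γ ⁻¹' (eball z r) = Set.Ioo a b ∧
    (∃ C₁ C₂ : Set R2, C₁ ≠ C₂ ∧
      components (eball z r \ γ '' Set.Ioo a b) = {C₁, C₂}) ∧
    β < α ∧ α < β + 2 * Real.pi ∧
    γ a = (z.1 + r * Real.cos α, z.2 + r * Real.sin α) ∧
    γ b = (z.1 + r * Real.cos β, z.2 + r * Real.sin β) ∧
    L ∈ components ((ellCurve γ a b z r α β '' Set.Icc (-1) 1)ᶜ) ∧
    Bornology.IsBounded L

/-- U lies to the left of γ: for some disk centered on the range of γ and simply split
by γ, U contains the left of γ in that disk. -/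
def LiesLeftOf (U : Set R2) (γ : ℝ → R2) : Prop :=
  ∃ z ∈ Set.range γ, ∃ r : ℝ, 0 < r ∧ ∃ L : Set R2, LeftInDisk γ z r L ∧ L ⊆ U

/-- χ is the intersection number of the pair (U,V), U a simple set: 0 if ∂U is bounded;
otherwise χ₊ − χ₋ where χ_± are the limits at ±∞ of 1_V ∘ γ for a simple path γ
parametrizing ∂U with U on its left. -/
def HasIntersectionNumber (U V : Set R2) (χ : ℤ) : Prop :=
  (Bornology.IsBounded (frontier U) ∧ χ = 0) ∨
  ((¬ Bornology.IsBounded (frontier U)) ∧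
    ∃ γ : ℝ → R2, IsSimplePath γ ∧ Set.range γ = frontier U ∧ LiesLeftOf U γ ∧
      ∃ cp cm : ℝ,
        Filter.Tendsto (fun t => indR V (γ t)) Filter.atTop (nhds cp) ∧
        Filter.Tendsto (fun t => indR V (γ t)) Filter.atBot (nhds cm) ∧
        (χ : ℝ) = cp - cm)

open Filter Topology

/-! Transversality forces `∂U ∩ ∂V` to be bounded, and `γ` is proper, so `γ(t)` avoids `∂V`
for `|t|` large. On each of the two tails the indicator of `V`, or of any component of `V`,
is then constant, and the two limit points `γ(T)`, `γ(T')` lie in at most two components.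
Additivity is `1_V = ∑_ℓ 1_{V_ℓ}` evaluated at these two points. -/

lemma d1_nonneg (x y : R2) : 0 ≤ d1 x y := add_nonneg (abs_nonneg _) (abs_nonneg _)

lemma bddBelow_image_d1 (x : R2) (S : Set R2) : BddBelow (d1 x '' S) :=
  ⟨0, by rintro _ ⟨y, -, rfl⟩; exact d1_nonneg x y⟩

lemma d1S_nonneg (x : R2) (S : Set R2) : 0 ≤ d1S x S :=
  Real.sInf_nonneg (by rintro _ ⟨y, -, rfl⟩; exact d1_nonneg x y)

lemma d1S_eq_zero_of_mem {x : R2} {S : Set R2} (h : x ∈ S) : d1S x S = 0 :=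
  le_antisymm ((csInf_le (bddBelow_image_d1 x S) ⟨x, h, rfl⟩).trans_eq (by simp [d1]))
    (d1S_nonneg x S)

lemma d1S_anti {x : R2} {S T : Set R2} (hST : S ⊆ T) (hS : S.Nonempty) :
    d1S x T ≤ d1S x S :=
  csInf_le_csInf (bddBelow_image_d1 x T) (hS.image _) (Set.image_mono hST)

lemma norm_le_eunorm (x : R2) : ‖x‖ ≤ eunorm x := by
  refine max_le ?_ ?_ <;> rw [Real.norm_eq_abs, ← Real.sqrt_sq_eq_abs] <;>
    exact Real.sqrt_le_sqrt (by nlinarith [sq_nonneg x.1, sq_nonneg x.2])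

lemma isBounded_setOf_eunorm_le (R : ℝ) : Bornology.IsBounded {x : R2 | eunorm x ≤ R} :=
  (Metric.isBounded_closedBall (x := (0 : R2)) (r := R)).subset fun x hx => by
    simpa using (norm_le_eunorm x).trans hx

namespace Transverse

variable {U V W : Set R2}

lemma mono (h : Transverse U V) (hVW : ∀ x, d1S x (frontier V) ≤ d1S x (frontier W)) :
    Transverse U W := by
  obtain ⟨c, hc0, hc1, hc⟩ := h
  refine ⟨c, hc0, hc1, fun x hx => (hc x hx).trans ?_⟩
  simp only [Psi]
  linarith [hVW x]

/-- Where `∂U` and `∂V` meet, `Ψ_{U,V} = 1`, while `|x|ᶜ > 1` once `|x| > 1/c > 1`. -/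
lemma isBounded_frontier_inter (h : Transverse U V) :
    Bornology.IsBounded (frontier U ∩ frontier V) := by
  obtain ⟨c, hc0, hc1, hc⟩ := h
  refine (isBounded_setOf_eunorm_le (1 / c)).subset fun x ⟨hxU, hxV⟩ =>
    show eunorm x ≤ 1 / c from le_of_not_gt fun hx => ?_
  have hone : 1 < eunorm x := (one_lt_one_div hc0 hc1).trans hx
  have hPsi := hc x hx.le
  simp only [Psi, d1S_eq_zero_of_mem hxU, d1S_eq_zero_of_mem hxV, add_zero] at hPsi
  exact (Real.one_lt_rpow hone hc0).not_ge hPsi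

end Transverse

section Components

variable {V C : Set R2}

lemma subset_of_mem_components (hC : C ∈ components V) : C ⊆ V := by
  obtain ⟨x, -, rfl⟩ := hC
  exact connectedComponentIn_subset V x

lemma eq_connectedComponentIn_of_mem_components (hC : C ∈ components V) {z : R2}
    (hz : z ∈ C) : C = connectedComponentIn V z := by
  obtain ⟨x, -, rfl⟩ := hC
  exact connectedComponentIn_eq hz

lemma IsOpen.of_mem_components (hV : IsOpen V) (hC : C ∈ components V) : IsOpen C := by
  obtain ⟨x, -, rfl⟩ := hC
  exact hV.connectedComponentIn

lemma frontier_subset_of_mem_components (hV : IsOpen V) (hC : C ∈ components V) :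
    frontier C ⊆ frontier V := by
  intro p hp
  rw [(hV.of_mem_components hC).frontier_eq] at hp
  refine hV.frontier_eq ▸ ⟨closure_mono (subset_of_mem_components hC) hp.1, fun hpV => hp.2 ?_⟩
  obtain ⟨w, hwp, hwC⟩ := mem_closure_iff.1 hp.1 _ hV.connectedComponentIn
    (mem_connectedComponentIn hpV)
  rw [eq_connectedComponentIn_of_mem_components hC hwC, ← connectedComponentIn_eq hwp]
  exact mem_connectedComponentIn hpV

/-- If `∂C = ∅` then `C = ℝ² = V`, and both distances are `sInf ∅`. -/
lemma d1S_frontier_le_of_mem_components (hV : IsOpen V) (hC : C ∈ components V) (x : R2) :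
    d1S x (frontier V) ≤ d1S x (frontier C) := by
  rcases (frontier C).eq_empty_or_nonempty with hempty | hne
  · obtain ⟨z, hz, rfl⟩ := hC
    have hCuniv := (isClopen_iff_frontier_eq_empty.2 hempty).eq_univ
      ⟨z, mem_connectedComponentIn hz⟩
    have hVuniv : V = Set.univ :=
      Set.eq_univ_of_univ_subset (hCuniv ▸ connectedComponentIn_subset V z)
    rw [hempty, hVuniv, frontier_univ]
  · exact d1S_anti (frontier_subset_of_mem_components hV hC) hne

lemma Transverse.of_mem_components {U : Set R2} (h : Transverse U V) (hV : IsOpen V)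
    (hC : C ∈ components V) : Transverse U C :=
  h.mono (d1S_frontier_le_of_mem_components hV hC)

lemma indR_eq_zero_of_ne_connectedComponentIn (hC : C ∈ components V) {z : R2}
    (h : C ≠ connectedComponentIn V z) : indR C z = 0 :=
  Set.indicator_of_notMem (fun hz => h (eq_connectedComponentIn_of_mem_components hC hz)) _

lemma hasSum_indR_components (z : R2) :
    HasSum (fun C : components V => indR C z) (indR V z) := by
  by_cases hz : z ∈ V
  · convert hasSum_single (f := fun C : components V => indR C z)
      ⟨connectedComponentIn V z, z, hz, rfl⟩
      fun C hC => indR_eq_zero_of_ne_connectedComponentIn C.2 fun h => hC (Subtype.ext h)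
      using 1
    simp only [indR, Set.indicator_of_mem hz, Set.indicator_of_mem (mem_connectedComponentIn hz)]
  · convert hasSum_zero using 1
    · ext C
      exact Set.indicator_of_notMem (fun hzC => hz (subset_of_mem_components C.2 hzC)) _
    · exact Set.indicator_of_notMem hz _

end Components

lemma IsPreconnected.subset_or_disjoint_of_disjoint_frontier {X : Type*} [TopologicalSpace X]
    {P W : Set X} (hP : IsPreconnected P) (h : Disjoint P (frontier W)) :
    P ⊆ W ∨ Disjoint P W := by
  have hcover : P ⊆ interior W ∪ (closure W)ᶜ := fun x hx => by
    by_cases hxW : x ∈ interior W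
    · exact Or.inl hxW
    · exact Or.inr fun hxcl => h.notMem_of_mem_left hx ⟨hxcl, hxW⟩
  rcases hP.subset_or_subset isOpen_interior isClosed_closure.isOpen_compl
    (disjoint_compl_right.mono_left (interior_subset.trans subset_closure)) hcover with h | h
  · exact Or.inl (h.trans interior_subset)
  · exact Or.inr ((disjoint_compl_left.mono_right subset_closure).mono_left h)

lemma tendsto_indR_of_isPreconnected {α : Type*} [TopologicalSpace α] {l : Filter α}
    {γ : α → R2} {s : Set α} {t₀ : α} {W : Set R2} (hs : IsPreconnected s) (hsl : s ∈ l)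
    (ht₀ : t₀ ∈ s) (hγ : ContinuousOn γ s) (hW : ∀ t ∈ s, γ t ∉ frontier W) :
    Tendsto (fun t => indR W (γ t)) l (𝓝 (indR W (γ t₀))) := by
  refine tendsto_const_nhds.congr' (Filter.mem_of_superset hsl fun t ht => ?_)
  rcases (hs.image γ hγ).subset_or_disjoint_of_disjoint_frontier
    (Set.disjoint_left.2 fun _ ⟨t, ht, hx⟩ => hx ▸ hW t ht) with h | h
  · simp [indR, h ⟨t, ht, rfl⟩, h ⟨t₀, ht₀, rfl⟩]
  · simp [indR, h.notMem_of_mem_left ⟨t, ht, rfl⟩, h.notMem_of_mem_left ⟨t₀, ht₀, rfl⟩]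

lemma IsSimplePath.tendsto_cocompact {γ : ℝ → R2} (hγ : IsSimplePath γ) :
    Tendsto γ (cocompact ℝ) (cocompact R2) :=
  (isProperMap_iff_tendsto_cocompact.1
    (isProperMap_iff_isCompact_preimage.2 ⟨hγ.continuous, fun K hK => hγ.proper K hK⟩)).2

lemma IsSimplePath.eventually_notMem_frontier {U V : Set R2} {γ : ℝ → R2}
    (hγ : IsSimplePath γ) (hrange : Set.range γ = frontier U) (hUV : Transverse U V) :
    ∀ᶠ t in cocompact ℝ, γ t ∉ frontier V :=
  (hγ.tendsto_cocompact.eventually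
    hUV.isBounded_frontier_inter.isCompact_closure.compl_mem_cocompact).mono
    fun t ht hV => ht (subset_closure ⟨hrange ▸ Set.mem_range_self t, hV⟩)

theorem intersection_number_additivity_general
    (U V : Set R2) (hUV : Transverse U V)
    (hV : IsGoodSet V) :
    (∀ C ∈ components V, Transverse U C) ∧
    (¬ Bornology.IsBounded (frontier U) →
      ∀ γ : ℝ → R2, IsSimplePath γ → Set.range γ = frontier U →
      ∃ χV : ℝ, ∃ χ : Set R2 → ℝ,
        (∃ cp cm : ℝ,
          Filter.Tendsto (fun t => indR V (γ t)) Filter.atTop (nhds cp) ∧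
          Filter.Tendsto (fun t => indR V (γ t)) Filter.atBot (nhds cm) ∧
          χV = cp - cm) ∧
        (∀ C ∈ components V, ∃ cp cm : ℝ,
          Filter.Tendsto (fun t => indR C (γ t)) Filter.atTop (nhds cp) ∧
          Filter.Tendsto (fun t => indR C (γ t)) Filter.atBot (nhds cm) ∧
          χ C = cp - cm) ∧
        (∃ C₁ C₂ : Set R2, ∀ C ∈ components V, χ C ≠ 0 → C = C₁ ∨ C = C₂) ∧
        χV = ∑' C : components V, χ C) := by
  have hVo : IsOpen V := hV.1
  refine ⟨fun C hC => hUV.of_mem_components hVo hC, fun _ γ hγ hrange => ?_⟩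
  have hfar := hγ.eventually_notMem_frontier hrange hUV
  obtain ⟨T, hT⟩ := eventually_atTop.1 (hfar.filter_mono atTop_le_cocompact)
  obtain ⟨T', hT'⟩ := eventually_atBot.1 (hfar.filter_mono atBot_le_cocompact)
  have hlim : ∀ W, frontier W ⊆ frontier V → ∃ cp cm : ℝ,
      Tendsto (fun t => indR W (γ t)) atTop (𝓝 cp) ∧
      Tendsto (fun t => indR W (γ t)) atBot (𝓝 cm) ∧
      indR W (γ T) - indR W (γ T') = cp - cm := fun W hW =>
    ⟨_, _, tendsto_indR_of_isPreconnected isPreconnected_Ici (Ici_mem_atTop T)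
        Set.self_mem_Ici hγ.continuous.continuousOn fun t ht h => hT t ht (hW h),
      tendsto_indR_of_isPreconnected isPreconnected_Iic (Iic_mem_atBot T')
        Set.self_mem_Iic hγ.continuous.continuousOn fun t ht h => hT' t ht (hW h), rfl⟩
  refine ⟨_, fun C => indR C (γ T) - indR C (γ T'), hlim V subset_rfl,
    fun C hC => hlim C (frontier_subset_of_mem_components hVo hC),
    ⟨connectedComponentIn V (γ T), connectedComponentIn V (γ T'), fun C hC hχ => ?_⟩,
    ((hasSum_indR_components _).sub (hasSum_indR_components _)).tsum_eq.symm⟩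
  by_contra! hne
  exact hχ (by simp only [indR_eq_zero_of_ne_connectedComponentIn hC hne.1,
    indR_eq_zero_of_ne_connectedComponentIn hC hne.2, sub_self])

/-- Lemma 7.9, additivity of the intersection number: for U simple
and V good and transverse to U, each connected component V_ℓ of V is transverse to U;
if ∂U is unbounded then, along any simple path γ parametrizing ∂U, the limits of the
indicators of V and of each V_ℓ at ±∞ exist, the resulting numbers χ(γ,V_ℓ) vanish for
all but at most two components, and χ(γ,V) = Σ_ℓ χ(γ,V_ℓ). -/
theorem intersection_number_additivity
    (U V : Set R2) (hUV : Transverse U V)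
    (hU : IsSimpleSet U) (hV : IsGoodSet V) :
    (∀ C ∈ components V, Transverse U C) ∧
    (¬ Bornology.IsBounded (frontier U) →
      ∀ γ : ℝ → R2, IsSimplePath γ → Set.range γ = frontier U →
      ∃ χV : ℝ, ∃ χ : Set R2 → ℝ,
        (∃ cp cm : ℝ,
          Filter.Tendsto (fun t => indR V (γ t)) Filter.atTop (nhds cp) ∧
          Filter.Tendsto (fun t => indR V (γ t)) Filter.atBot (nhds cm) ∧
          χV = cp - cm) ∧
        (∀ C ∈ components V, ∃ cp cm : ℝ,
          Filter.Tendsto (fun t => indR C (γ t)) Filter.atTop (nhds cp) ∧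
          Filter.Tendsto (fun t => indR C (γ t)) Filter.atBot (nhds cm) ∧
          χ C = cp - cm) ∧
        (∃ C₁ C₂ : Set R2, ∀ C ∈ components V, χ C ≠ 0 → C = C₁ ∨ C = C₂) ∧
        χV = ∑' C : components V, χ C) :=
  intersection_number_additivity_general U V hUV hV
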